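/- Let V and W be copies of ℝ³ equipped with the cross-product Lie bracket (so each is isomorphic to so(3)), and let B ∈ V ⊗ W, regarded as a linear map B : V* → W. Define [B.B] ∈ V ⊗ W by ([B.B])(v* ) involving the bilinear map (1/2)[·,·]_V ⊗ [·,·]_W applied to B ⊗ B. If [B.B] = 0, then B has rank at most 1 as a linear map. -/

import Mathlib

open scoped Matrix

/- STATEMENT 4: Let V and W be copies of ℝ³ with the cross-product Lie bracket
(each isomorphic to so(3)), and let B ∈ V ⊗ W.  Writing B in the standard
basis as a matrix `M` (so B = ∑ᵢⱼ M i j • eᵢ ⊗ eⱼ, i.e. B : V* → W is the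
linear map with matrix M, whose i-th row is `M i`), the element
[B.B] ∈ V ⊗ W defined by the bilinear map (1/2)[·,·]_V ⊗ [·,·]_W applied to
B ⊗ B has matrix components
  [B.B] k l = (1/2) ∑ᵢⱼ (eᵢ ×₃ eⱼ) k * ((M i) ×₃ (M j)) l.
If [B.B] = 0, then B has rank at most 1 as a linear map. -/
theorem rank_le_one_of_bracket_square_eq_zero
    (M : Matrix (Fin 3) (Fin 3) ℝ)
    (BB : Matrix (Fin 3) (Fin 3) ℝ)
    (hBB : ∀ k l, BB k l =
      (1 / 2) * ∑ i : Fin 3, ∑ j : Fin 3,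
        (crossProduct (Pi.single i 1) (Pi.single j 1)) k *
          (crossProduct (M i) (M j)) l)
    (h : BB = 0) :
    M.rank ≤ 1 := by
  have hz : ∀ k l : Fin 3, (0:ℝ) =
      (1 / 2) * ∑ i : Fin 3, ∑ j : Fin 3,
        (crossProduct (Pi.single i 1) (Pi.single j 1)) k *
          (crossProduct (M i) (M j)) l := by
    intro k l
    have := hBB k l
    rw [h] at this
    simpa using this
  -- minors of rows 0,1
  have m01 : ∀ k l : Fin 3, M 0 k * M 1 l = M 0 l * M 1 k := by
    have t0 := hz 2 0
    have t1 := hz 2 1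
    have t2 := hz 2 2
    simp [Fin.sum_univ_three, cross_apply, Pi.single_apply] at t0 t1 t2
    have u0 : M 0 1 * M 1 2 = M 0 2 * M 1 1 := by linear_combination t0 / 2
    have u1 : M 0 2 * M 1 0 = M 0 0 * M 1 2 := by linear_combination t1 / 2
    have u2 : M 0 0 * M 1 1 = M 0 1 * M 1 0 := by linear_combination t2 / 2
    intro k l
    fin_cases k <;> fin_cases l <;>
      first
        | rfl
        | exact u0 | exact u0.symm
        | exact u1 | exact u1.symm
        | exact u2 | exact u2.symm
  -- minors of rows 1,2
  have m12 : ∀ k l : Fin 3, M 1 k * M 2 l = M 1 l * M 2 k := by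
    have t0 := hz 0 0
    have t1 := hz 0 1
    have t2 := hz 0 2
    simp [Fin.sum_univ_three, cross_apply, Pi.single_apply] at t0 t1 t2
    have u0 : M 1 1 * M 2 2 = M 1 2 * M 2 1 := by linear_combination t0 / 2
    have u1 : M 1 2 * M 2 0 = M 1 0 * M 2 2 := by linear_combination t1 / 2
    have u2 : M 1 0 * M 2 1 = M 1 1 * M 2 0 := by linear_combination t2 / 2
    intro k l
    fin_cases k <;> fin_cases l <;>
      first
        | rfl
        | exact u0 | exact u0.symm
        | exact u1 | exact u1.symm
        | exact u2 | exact u2.symm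
  -- minors of rows 0,2
  have m02 : ∀ k l : Fin 3, M 0 k * M 2 l = M 0 l * M 2 k := by
    have t0 := hz 1 0
    have t1 := hz 1 1
    have t2 := hz 1 2
    simp [Fin.sum_univ_three, cross_apply, Pi.single_apply] at t0 t1 t2
    have u0 : M 0 1 * M 2 2 = M 0 2 * M 2 1 := by linear_combination -t0 / 2
    have u1 : M 0 2 * M 2 0 = M 0 0 * M 2 2 := by linear_combination -t1 / 2
    have u2 : M 0 0 * M 2 1 = M 0 1 * M 2 0 := by linear_combination -t2 / 2
    intro k l
    fin_cases k <;> fin_cases l <;>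
      first
        | rfl
        | exact u0 | exact u0.symm
        | exact u1 | exact u1.symm
        | exact u2 | exact u2.symm
  have m10 : ∀ k l : Fin 3, M 1 k * M 0 l = M 1 l * M 0 k := fun k l => by
    linear_combination m01 l k
  have m21 : ∀ k l : Fin 3, M 2 k * M 1 l = M 2 l * M 1 k := fun k l => by
    linear_combination m12 l k
  have m20 : ∀ k l : Fin 3, M 2 k * M 0 l = M 2 l * M 0 k := fun k l => by
    linear_combination m02 l k
  have minor : ∀ i j k l : Fin 3, M i k * M j l = M i l * M j k := by
    intro i j k l
    fin_cases i <;> fin_cases j <;>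
      first
        | exact mul_comm _ _
        | exact m01 k l
        | exact m12 k l
        | exact m02 k l
        | exact m10 k l
        | exact m21 k l
        | exact m20 k l
  by_cases hM : M = 0
  · simp [hM]
  · have : ∃ i0 j0, M i0 j0 ≠ 0 := by
      by_contra hc
      push_neg at hc
      exact hM (by ext i j; simpa using hc i j)
    obtain ⟨i0, j0, hij⟩ := this
    set c : Fin 3 → ℝ := fun i => M i j0 / M i0 j0 with hc
    have hrow : ∀ i l, M i l = c i * M i0 l := by
      intro i l
      rw [hc]
      rw [div_mul_eq_mul_div, eq_div_iff hij]
      linear_combination minor i i0 l j0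
    have hle : LinearMap.range M.mulVecLin ≤ Submodule.span ℝ {c} := by
      rintro x ⟨v, rfl⟩
      have : M.mulVecLin v = (∑ l, M i0 l * v l) • c := by
        ext i
        simp only [Matrix.mulVecLin_apply, Matrix.mulVec, dotProduct,
          Fin.sum_univ_three, Pi.smul_apply, smul_eq_mul]
        rw [hrow i 0, hrow i 1, hrow i 2]
        ring
      rw [this]
      exact Submodule.smul_mem _ _ (Submodule.mem_span_singleton_self c)
    have hc0 : c ≠ 0 := by
      intro hcz
      have : c i0 = 0 := by rw [hcz]; rfl
      rw [hc] at this
      simp only at this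
      exact hij (by
        field_simp at this; exact absurd this one_ne_zero)
    calc M.rank = Module.finrank ℝ (LinearMap.range M.mulVecLin) := rfl
      _ ≤ Module.finrank ℝ (Submodule.span ℝ {c}) := Submodule.finrank_mono hle
      _ = 1 := finrank_span_singleton hc0
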